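/- arXiv:2304.08000 — 4 statements merged into one kernel-verified Lean document; each statement's English description precedes it below -/
import Mathlib

section
/- Let M be a matroid and adM an adjoint of M with adjoint map φ: L(M) → L(adM). Then for every flat X of M, the rank of φ(X) in adM equals r(M) − r_M(X). -/
open Set Matroid
open scoped Matroid

namespace AdjointPaper

variable {α β γ : Type*}

/-- The rank of a set `X` in a matroid `M`: the supremum of cardinalities of
independent subsets of `X`. -/
noncomputable def mrank (M : Matroid α) (X : Set α) : ℕ :=
  sSup (Set.ncard '' {I | M.Indep I ∧ I ⊆ X})

/-- The rank of a matroid. -/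
noncomputable def mrk (M : Matroid α) : ℕ := mrank M M.E

/-- A hyperplane of `M`: a coatom of the lattice of flats. -/
def IsHyperplane (M : Matroid α) (H : Set α) : Prop :=
  M.IsFlat H ∧ H ≠ M.E ∧ ∀ F, M.IsFlat F → H ⊂ F → F = M.E

/-- An atom of the lattice of flats of `M`. -/
def IsFlatAtom (M : Matroid α) (P : Set α) : Prop :=
  M.IsFlat P ∧ M.closure ∅ ⊂ P ∧ ∀ F, M.IsFlat F → M.closure ∅ ⊂ F → F ⊆ P → F = P

/-- `e` is a loop of `M`. -/
def IsLoop (M : Matroid α) (e : α) : Prop := e ∈ M.E ∧ ¬ M.Indep {e}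

/-- `M` is loopless. -/
def Loopless (M : Matroid α) : Prop := ∀ e ∈ M.E, M.Indep {e}

/-- `M` is simple: loopless and with no two parallel elements. -/
def Simple (M : Matroid α) : Prop :=
  (∀ e ∈ M.E, M.Indep {e}) ∧
    ∀ e ∈ M.E, ∀ f ∈ M.E, M.closure {e} = M.closure {f} → e = f

/-- `φ` is an adjoint map from `M` to `N`: an injective, order-reversing map on
flats taking hyperplanes of `M` bijectively onto the atoms of `N`, with
`N` of the same rank as `M`. -/
structure IsAdjointMap (M : Matroid α) (N : Matroid β) (φ : Set α → Set β) : Prop where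
  rank_eq : mrk N = mrk M
  flat : ∀ ⦃F⦄, M.IsFlat F → N.IsFlat (φ F)
  inj : ∀ ⦃F F'⦄, M.IsFlat F → M.IsFlat F' → φ F = φ F' → F = F'
  antitone : ∀ ⦃F F'⦄, M.IsFlat F → M.IsFlat F' → F ⊆ F' → φ F' ⊆ φ F
  hyper_atom : ∀ ⦃H⦄, IsHyperplane M H → IsFlatAtom N (φ H)
  atom_surj : ∀ ⦃P⦄, IsFlatAtom N P → ∃ H, IsHyperplane M H ∧ φ H = P

/-- `N` is an adjoint of `M`. -/
def IsAdjoint (M : Matroid α) (N : Matroid β) : Prop := ∃ φ, IsAdjointMap M N φ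

/-- Isomorphism of matroids. -/
def Iso (M : Matroid α) (N : Matroid β) : Prop :=
  ∃ f : α → β, Set.BijOn f M.E N.E ∧ ∀ I ⊆ M.E, (M.Indep I ↔ N.Indep (f '' I))

/-- Connectedness: `M` has nonempty ground set and is not a direct sum of two
matroids on nonempty ground sets. -/
def Conn (M : Matroid α) : Prop :=
  M.E.Nonempty ∧ ∀ (N₁ N₂ : Matroid α) (h : Disjoint N₁.E N₂.E),
    N₁.E.Nonempty → N₂.E.Nonempty → M ≠ Matroid.disjointSum N₁ N₂ h

/-- A circuit of `M`: a minimal dependent set. -/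
def IsCircuit (M : Matroid α) (C : Set α) : Prop :=
  C ⊆ M.E ∧ ¬ M.Indep C ∧ ∀ D, D ⊂ C → M.Indep D

/-- `K` is a connected component of `M`. -/
def ConnComponent (M : Matroid α) (K : Set α) : Prop :=
  K ⊆ M.E ∧ K.Nonempty ∧ Conn (M ↾ K) ∧
    ∀ C, IsCircuit M C → C ⊆ K ∨ Disjoint C K

/-- `M` is a modular matroid: every pair of flats is a modular pair. -/
def Modular (M : Matroid α) : Prop :=
  ∀ F F', M.IsFlat F → M.IsFlat F' →
    mrank M (M.closure (F ∪ F')) + mrank M (F ∩ F') = mrank M F + mrank M F'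

/-- The lattice of flats of `N` is isomorphic to the opposite of the lattice of
flats of `M`. -/
def FlatOpIso (M : Matroid α) (N : Matroid β) : Prop :=
  ∃ ψ : Set α → Set β, (∀ F, M.IsFlat F → N.IsFlat (ψ F)) ∧
    (∀ F F', M.IsFlat F → M.IsFlat F' → (F ⊆ F' ↔ ψ F' ⊆ ψ F)) ∧
    ∀ G, N.IsFlat G → ∃ F, M.IsFlat F ∧ ψ F = G

/-- A linear subclass of `M`: a set of hyperplanes closed under the hyperplanes
through a comodular intersection of two of its members. The lattice of all
linear subclasses ordered by inclusion is the extension lattice `E(M)`. -/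
def LinearSubclass (M : Matroid α) (S : Set (Set α)) : Prop :=
  (∀ H ∈ S, IsHyperplane M H) ∧
    ∀ H₁ ∈ S, ∀ H₂ ∈ S, mrank M (H₁ ∩ H₂) = mrk M - 2 →
      ∀ H₃, IsHyperplane M H₃ → H₁ ∩ H₂ ⊆ H₃ → H₃ ∈ S

/-- `N` is (isomorphic to) the projective geometry `PG (r-1, F)`, via a
representation `f` hitting every point of the projective space exactly once. -/
def IsProjGeomRep (N : Matroid β) (r : ℕ) (F : Type*) [Field F] : Prop :=
  ∃ f : β → (Fin r → F),
    (∀ e ∈ N.E, f e ≠ 0) ∧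
    (∀ e ∈ N.E, ∀ e' ∈ N.E,
      Submodule.span F {f e} = Submodule.span F {f e'} → e = e') ∧
    (∀ v : Fin r → F, v ≠ 0 → ∃ e ∈ N.E, Submodule.span F {f e} = Submodule.span F {v}) ∧
    ∀ I, I ⊆ N.E → (N.Indep I ↔ LinearIndependent F (fun x : I => f x.1))

/-- `N` is (isomorphic to) the finite projective geometry `PG (r-1, q)`. -/
def IsProjGeom (N : Matroid β) (r q : ℕ) : Prop :=
  ∃ (F : Type) (instF : Field F) (instT : Fintype F),
    @Fintype.card F instT = q ∧ @IsProjGeomRep _ N r F instF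

/-- `M` is a projective plane: a simple rank-3 matroid in which every line has
at least three points and every two lines meet. -/
def IsProjPlane (M : Matroid α) : Prop :=
  Simple M ∧ mrk M = 3 ∧
    (∀ L, M.IsFlat L → mrank M L = 2 → 3 ≤ L.ncard) ∧
    ∀ L L', M.IsFlat L → M.IsFlat L' → mrank M L = 2 → mrank M L' = 2 → (L ∩ L').Nonempty

/-- `N` is (isomorphic to) the uniform matroid `U_{r,m}`. -/
def IsUnif (N : Matroid β) (r m : ℕ) : Prop :=
  N.E.Finite ∧ N.E.ncard = m ∧ ∀ I, I ⊆ N.E → (N.Indep I ↔ I.Finite ∧ I.ncard ≤ r)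

/-! An adjoint map is strictly order-reversing on flats, and a strict chain of flats of length `k`
forces a rank jump of at least `k`. A maximal chain of flats from `X` up to `E(M)` has length
`r(M) - r(X)` and is sent to a strict chain below `φ X`, so `r(φ X) ≥ r(M) - r(X)`; a maximal chain
from the loops `cl(∅)` up to `X` has length `r(X)` and is sent to a strict chain from `φ X` up to
`φ (cl ∅)`, of rank at most `r(N) = r(M)`, so `r(φ X) + r(X) ≤ r(M)`. -/

section Rank

variable {M : Matroid α} [M.RankFinite] {X Y : Set α}

lemma cast_mrank (M : Matroid α) [M.RankFinite] (X : Set α) : (mrank M X : ℕ∞) = M.eRk X := by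
  obtain ⟨I, hI⟩ := M.exists_isBasis' X
  have hmax : IsGreatest (Set.ncard '' {J | M.Indep J ∧ J ⊆ X}) I.ncard := by
    refine ⟨⟨I, ⟨hI.indep, hI.subset⟩, rfl⟩, ?_⟩
    rintro _ ⟨J, ⟨hJ, hJX⟩, rfl⟩
    have hle := hJ.encard_le_eRk_of_subset hJX
    rw [← hI.encard_eq_eRk, ← hJ.finite.cast_ncard_eq, ← hI.indep.finite.cast_ncard_eq] at hle
    exact_mod_cast hle
  rw [mrank, hmax.csSup_eq, hI.indep.finite.cast_ncard_eq, hI.encard_eq_eRk]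

lemma mrank_mono (hXY : X ⊆ Y) : mrank M X ≤ mrank M Y := by
  have hle := M.eRk_mono hXY
  rw [← cast_mrank, ← cast_mrank] at hle
  exact_mod_cast hle

lemma mrank_le_mrk (X : Set α) : mrank M X ≤ mrk M := by
  have hle := M.eRk_le_eRank X
  rw [← eRk_ground, ← cast_mrank, ← cast_mrank] at hle
  exact_mod_cast hle

lemma mrank_closure_empty : mrank M (M.closure ∅) = 0 := by
  have h : (mrank M (M.closure ∅) : ℕ∞) = 0 := by
    rw [cast_mrank, eRk_closure_eq, eRk_empty]
  exact_mod_cast h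

lemma mrank_insert_of_isFlat {e : α} (hX : M.IsFlat X) (he : e ∈ M.E \ X) :
    mrank M (insert e X) = mrank M X + 1 := by
  have h := eRk_insert_eq_add_one (M := M) (X := X) (by rwa [hX.closure])
  rw [← cast_mrank, ← cast_mrank] at h
  exact_mod_cast h

lemma mrank_lt_of_isFlat_of_ssubset (hX : M.IsFlat X) (hXY : X ⊂ Y) (hY : Y ⊆ M.E) :
    mrank M X < mrank M Y := by
  obtain ⟨e, heY, heX⟩ := exists_of_ssubset hXY
  calc mrank M X < mrank M (insert e X) := by
        rw [mrank_insert_of_isFlat hX ⟨hY heY, heX⟩]; exact Nat.lt_succ_self _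
    _ ≤ mrank M Y := mrank_mono (insert_subset heY hXY.subset)

lemma exists_isFlat_mrank_eq_add_one (hX : M.IsFlat X) (hY : M.IsFlat Y) (hXY : X ⊂ Y) :
    ∃ F, M.IsFlat F ∧ X ⊂ F ∧ F ⊆ Y ∧ mrank M F = mrank M X + 1 := by
  obtain ⟨e, heY, heX⟩ := exists_of_ssubset hXY
  have heE : e ∈ M.E := hY.subset_ground heY
  have hsub : insert e X ⊆ M.closure (insert e X) :=
    M.subset_closure _ (insert_subset heE hX.subset_ground)
  refine ⟨M.closure (insert e X), M.isFlat_closure _, ?_, ?_, ?_⟩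
  · exact (ssubset_insert heX).trans_subset hsub
  · exact hY.closure ▸ M.closure_subset_closure (insert_subset heY hXY.subset)
  · have h : (mrank M (M.closure (insert e X)) : ℕ∞) = mrank M (insert e X) := by
      rw [cast_mrank, cast_mrank, eRk_closure_eq]
    rw [Nat.cast_inj.mp h, mrank_insert_of_isFlat hX ⟨heE, heX⟩]

lemma mrank_add_mrank_sub_le_of_strictAntiOn {N : Matroid β} [N.RankFinite]
    {φ : Set α → Set β} (hflat : ∀ ⦃F⦄, M.IsFlat F → N.IsFlat (φ F))
    (hφ : StrictAntiOn φ {F | M.IsFlat F}) (hX : M.IsFlat X) (hY : M.IsFlat Y) (hXY : X ⊆ Y) :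
    mrank N (φ Y) + (mrank M Y - mrank M X) ≤ mrank N (φ X) := by
  induction hk : mrank M Y - mrank M X generalizing X with
  | zero => simpa using mrank_mono (hφ.antitoneOn hX hY hXY)
  | succ k ih =>
    have hXY' : X ⊂ Y := hXY.ssubset_of_ne (by rintro rfl; simp at hk)
    obtain ⟨F, hF, hXF, hFY, hrF⟩ := exists_isFlat_mrank_eq_add_one hX hY hXY'
    have hstep := ih hF hFY (by omega)
    have hlt : mrank N (φ F) < mrank N (φ X) :=
      mrank_lt_of_isFlat_of_ssubset (hflat hF) (hφ hX hF hXF) (hflat hX).subset_ground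
    omega

end Rank

lemma IsAdjointMap.strictAntiOn {M : Matroid α} {N : Matroid β} {φ : Set α → Set β}
    (hφ : IsAdjointMap M N φ) : StrictAntiOn φ {F | M.IsFlat F} :=
  fun _ hF _ hF' hlt ↦
    (hφ.antitone hF hF' hlt.subset).ssubset_of_ne fun h ↦ hlt.ne (hφ.inj hF' hF h).symm

/-- for an adjoint map `φ` and every flat `X` of `M`, the rank of
`φ X` in the adjoint equals `r(M) - r_M(X)`. -/
theorem statement_0 {M : Matroid α} {N : Matroid β} [M.Finite] [N.Finite]
    {φ : Set α → Set β} (hφ : IsAdjointMap M N φ) {X : Set α} (hX : M.IsFlat X) :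
    mrank N (φ X) = mrk M - mrank M X := by
  have hloops : M.closure ∅ ⊆ X := hX.closure ▸ M.closure_subset_closure (empty_subset X)
  have hbelow := mrank_add_mrank_sub_le_of_strictAntiOn hφ.flat hφ.strictAntiOn
    hX M.ground_isFlat hX.subset_ground
  have habove := mrank_add_mrank_sub_le_of_strictAntiOn hφ.flat hφ.strictAntiOn
    (M.isFlat_closure ∅) hX hloops
  have hN := mrank_le_mrk (M := N) (φ (M.closure ∅))
  have hM := mrank_le_mrk (M := M) X
  rw [mrank_closure_empty] at habove
  rw [hφ.rank_eq] at hN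
  unfold mrk at *
  omega

end AdjointPaper
end

section
/- Let M be a matroid of rank r and adM an adjoint of M with ground set H(M) (so that each non-loop e of M yields the hyperplane H[e] = {H ∈ H(M) : e ∈ H} of adM). If B is a basis of M, then the set of fundamental hyperplanes {H(e;B) : e ∈ B} is a basis of adM. -/
/-!
The fundamental hyperplanes `H(f;B)` with `f ≠ e` all contain `e`, while `H(e;B)` does not. So in
`adM` they lie in the hyperplane `H[e]`, which misses `H(e;B)`; hence no `H(e;B)` is in the
closure of the others and the family is independent. It has `|B| = r` distinct members, and `adM`
has rank `r`, so it is a basis.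
-/

open Set Matroid
open scoped Matroid

namespace AdjointPaper

variable {α β γ : Type*}

section

variable {M : Matroid α} {I B X : Set α} {e f : α}

lemma mrk_eq_ncard_of_isBase [M.RankFinite] (hB : M.IsBase B) : mrk M = B.ncard := by
  refine IsGreatest.csSup_eq ⟨⟨B, ⟨hB.indep, hB.subset_ground⟩, rfl⟩, ?_⟩
  rintro _ ⟨I, ⟨hI, -⟩, rfl⟩
  obtain ⟨B', hB', hIB'⟩ := hI.exists_isBase_superset
  exact (ncard_le_ncard hIB' hB'.finite).trans (hB'.ncard_eq_ncard_of_isBase hB).le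

lemma isBase_of_indep_of_ncard_eq_mrk [M.RankFinite] (hI : M.Indep I) (hcard : I.ncard = mrk M) :
    M.IsBase I := by
  obtain ⟨B, hB, hIB⟩ := hI.exists_isBase_superset
  rwa [eq_of_subset_of_ncard_le hIB (by rw [hcard, mrk_eq_ncard_of_isBase hB]) hB.finite]

lemma indep_of_forall_exists_isFlat (hIE : I ⊆ M.E)
    (h : ∀ x ∈ I, ∃ F, M.IsFlat F ∧ I \ {x} ⊆ F ∧ x ∉ F) : M.Indep I := by
  refine indep_iff_forall_notMem_closure_sdiff'.2 ⟨hIE, fun x hx hxcl => ?_⟩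
  obtain ⟨F, hF, hIF, hxF⟩ := h x hx
  exact hxF (hF.closure ▸ M.closure_subset_closure hIF hxcl)

/-- Any flat strictly above `M.closure X` contains some `x ∉ M.closure X`, which by the exchange
property spans together with `X` as much as `e` does. -/
lemma isHyperplane_closure_of_closure_insert_eq_ground (he : e ∈ M.E \ M.closure X)
    (hspan : M.closure (insert e X) = M.E) : IsHyperplane M (M.closure X) := by
  refine ⟨M.isFlat_closure X, fun h => he.2 (h ▸ he.1), fun F hF hXF => ?_⟩
  obtain ⟨x, hxF, hxX⟩ := exists_of_ssubset hXF
  have hx : x ∈ M.closure (insert e X) \ M.closure X := ⟨hspan ▸ hF.subset_ground hxF, hxX⟩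
  have hxspan : M.closure (insert x X) = M.E := (M.closure_insert_congr hx).trans hspan
  refine hF.subset_ground.antisymm ?_
  rw [← hxspan, ← closure_insert_closure_eq_closure_insert, ← hF.closure]
  exact M.closure_subset_closure (insert_subset hxF hXF.subset)

lemma isHyperplane_closure_sdiff_singleton (hB : M.IsBase B) (he : e ∈ B) :
    IsHyperplane M (M.closure (B \ {e})) :=
  isHyperplane_closure_of_closure_insert_eq_ground
    ⟨hB.subset_ground he, hB.indep.notMem_closure_sdiff_of_mem he⟩
    (by rw [insert_sdiff_singleton, insert_eq_of_mem he, hB.closure_eq])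

lemma _root_.Matroid.Indep.mem_closure_sdiff_singleton_iff (hI : M.Indep I) (he : e ∈ I) :
    e ∈ M.closure (I \ {f}) ↔ e ≠ f := by
  refine ⟨fun h hef => hI.notMem_closure_sdiff_of_mem he (hef ▸ h), fun hef => ?_⟩
  exact M.mem_closure_of_mem' ⟨he, hef⟩ (hI.subset_ground he)

lemma _root_.Matroid.Indep.injOn_closure_sdiff_singleton (hI : M.Indep I) :
    InjOn (fun e => M.closure (I \ {e})) I := by
  intro e he f _ hef
  simp only at hef
  by_contra hne
  exact (hI.mem_closure_sdiff_singleton_iff he).1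
    (hef ▸ (hI.mem_closure_sdiff_singleton_iff he).2 hne) rfl

end

/-- the fundamental hyperplanes of a basis of `M` form a basis of
an adjoint realized on the ground set `H(M)`. -/
theorem statement_3 {M : Matroid α} {N : Matroid (Set α)} [M.Finite] [N.Finite]
    {r : ℕ} (hrM : mrk M = r) (hrN : mrk N = r)
    (hE : N.E = {H | IsHyperplane M H})
    (hHyp : ∀ e ∈ M.E, ¬ IsLoop M e →
      IsHyperplane N {H | IsHyperplane M H ∧ e ∈ H})
    {B : Set α} (hB : M.IsBase B) :
    N.IsBase ((fun e => M.closure (B \ {e})) '' B) := by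
  have hsubE : (fun e => M.closure (B \ {e})) '' B ⊆ N.E := by
    rintro _ ⟨e, he, rfl⟩
    exact hE ▸ isHyperplane_closure_sdiff_singleton hB he
  have hindep : N.Indep ((fun e => M.closure (B \ {e})) '' B) := by
    refine indep_of_forall_exists_isFlat hsubE ?_
    rintro _ ⟨e, he, rfl⟩
    have hmem : ∀ f, e ∈ M.closure (B \ {f}) ↔ e ≠ f :=
      fun _ => hB.indep.mem_closure_sdiff_singleton_iff he
    have hnonloop : ¬ IsLoop M e := fun hl => hl.2 (hB.indep.subset (singleton_subset_iff.2 he))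
    refine ⟨_, (hHyp e (hB.subset_ground he) hnonloop).1, ?_, fun h => (hmem e).1 h.2 rfl⟩
    rintro _ ⟨⟨f, hf, rfl⟩, hne⟩
    exact ⟨isHyperplane_closure_sdiff_singleton hB hf, (hmem f).2 fun hef => hne (hef ▸ rfl)⟩
  refine isBase_of_indep_of_ncard_eq_mrk hindep ?_
  rw [hB.indep.injOn_closure_sdiff_singleton.ncard_image, ← mrk_eq_ncard_of_isBase hB, hrM, hrN]

end AdjointPaper
end

section
/- Let M be a simple modular matroid of rank r. Then the opposite lattice L(M)^op of the lattice of flats of M is isomorphic to the extension lattice E(M) of M, via the map sending a flat X to the set H_X(M) = {H a hyperplane of M : X ⊆ H}. -/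
open Set Matroid
open scoped Matroid

namespace AdjointPaper

variable {α β γ : Type*}

/-! Every flat is the intersection of the hyperplanes containing it, so `X ↦ H_X(M)` is an
order embedding of `L(M)^op`. For surjectivity, given a linear subclass `S` take `X = ⋂ S`:
by modularity, the flats `G` all of whose hyperplanes lie in `S` are closed under intersecting
with a member of `S`, and starting from `G = E` this reaches `X`. -/

lemma _root_.Matroid.IsFlat.inter {M : Matroid α} {F G : Set α} (hF : M.IsFlat F)
    (hG : M.IsFlat G) : M.IsFlat (F ∩ G) := by
  rw [inter_eq_iInter]
  exact IsFlat.iInter (by rintro (_ | _) <;> assumption)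

lemma isFlat_ground_inter_sInter {M : Matroid α} {S : Set (Set α)}
    (hS : ∀ F ∈ S, M.IsFlat F) : M.IsFlat (M.E ∩ ⋂₀ S) := by
  rw [← sInter_insert, sInter_eq_iInter]
  have : Nonempty (insert M.E S : Set (Set α)) := ⟨⟨M.E, mem_insert _ _⟩⟩
  exact IsFlat.iInter fun F =>
    (mem_insert_iff.mp F.2).elim (fun h => by rw [h]; exact M.ground_isFlat) (hS F)

lemma natCast_mrank (M : Matroid α) [M.Finite] (X : Set α) : (mrank M X : ℕ∞) = M.eRk X := by
  obtain ⟨I, hI⟩ := M.exists_isBasis' X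
  have hcard : ∀ J, M.Indep J → (J.ncard : ℕ∞) = J.encard :=
    fun J hJ => (M.set_finite J hJ.subset_ground).cast_ncard_eq
  have hbound : ∀ n ∈ Set.ncard '' {J | M.Indep J ∧ J ⊆ X}, n ≤ I.ncard := by
    rintro _ ⟨J, ⟨hJ, hJX⟩, rfl⟩
    have hle := hJ.encard_le_eRk_of_subset hJX
    rw [← hI.encard_eq_eRk, ← hcard J hJ, ← hcard I hI.indep] at hle
    exact_mod_cast hle
  have hI_mem : I.ncard ∈ Set.ncard '' {J | M.Indep J ∧ J ⊆ X} :=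
    ⟨I, ⟨hI.indep, hI.subset⟩, rfl⟩
  rw [show mrank M X = I.ncard from le_antisymm (csSup_le ⟨_, hI_mem⟩ hbound)
    (le_csSup ⟨_, hbound⟩ hI_mem), hcard I hI.indep, hI.encard_eq_eRk]

section Rank

variable {M : Matroid α} [M.Finite] {X F : Set α} {x : α}

lemma eq_of_isFlat_subset_of_mrank_le (hF : M.IsFlat F) (hFX : F ⊆ X) (hX : X ⊆ M.E)
    (h : mrank M X ≤ mrank M F) : F = X := by
  have hFfin : M.IsRkFinite F := M.isRkFinite_of_finite (M.set_finite F hF.subset_ground)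
  have hcl := hFfin.closure_eq_closure_of_subset_of_eRk_ge_eRk hFX
    (by rw [← natCast_mrank, ← natCast_mrank]; exact_mod_cast h)
  rw [hF.closure] at hcl
  exact hFX.antisymm (hcl ▸ M.subset_closure X)

lemma mrank_lt_of_isFlat_ssubset (hF : M.IsFlat F) (hFX : F ⊂ X) (hX : X ⊆ M.E) :
    mrank M F < mrank M X :=
  lt_of_not_ge fun h => hFX.ne (eq_of_isFlat_subset_of_mrank_le hF hFX.subset hX h)

lemma mrank_closure_insert (hF : M.IsFlat F) (hx : x ∈ M.E \ F) :
    mrank M (M.closure (insert x F)) = mrank M F + 1 := by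
  apply Nat.cast_injective (R := ℕ∞)
  push_cast
  rw [natCast_mrank, natCast_mrank, eRk_closure_eq, eRk_insert_eq_add_one (by rwa [hF.closure])]

end Rank

section Hyperplane

variable {M : Matroid α} {X F H K : Set α} {x : α}

lemma IsHyperplane.eq_of_subset (hH : IsHyperplane M H) (hK : IsHyperplane M K) (h : H ⊆ K) :
    H = K :=
  by_contra fun hne => hK.2.1 (hH.2.2 K hK.1 (h.ssubset_of_ne hne))

lemma IsHyperplane.closure_eq_ground (hH : IsHyperplane M H) (hHX : H ⊆ X) (hX : X ⊆ M.E)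
    (hXH : ¬ X ⊆ H) : M.closure X = M.E := by
  obtain ⟨x, hxX, hxH⟩ := not_subset.mp hXH
  refine hH.2.2 _ (M.isFlat_closure X) ((ssubset_iff_of_subset ?_).mpr ⟨x, ?_, hxH⟩)
  · exact hHX.trans (M.subset_closure X)
  · exact M.subset_closure X hX hxX

variable [M.Finite]

lemma IsHyperplane.mrank_add_one (hH : IsHyperplane M H) : mrank M H + 1 = mrk M := by
  obtain ⟨x, hxE, hxH⟩ := exists_of_ssubset (hH.1.subset_ground.ssubset_of_ne hH.2.1)
  rw [← mrank_closure_insert hH.1 ⟨hxE, hxH⟩, hH.closure_eq_ground (subset_insert x H)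
    (insert_subset hxE hH.1.subset_ground) fun h => hxH (h (mem_insert x H))]
  rfl

lemma isHyperplane_of_mrank_add_one (hF : M.IsFlat F) (h : mrank M F + 1 = mrk M) :
    IsHyperplane M F := by
  refine ⟨hF, fun hFE => Nat.succ_ne_self _ (hFE ▸ h), fun G hG hFG => ?_⟩
  have hlt := mrank_lt_of_isFlat_ssubset hF hFG hG.subset_ground
  exact eq_of_isFlat_subset_of_mrank_le hG hG.subset_ground Subset.rfl (by unfold mrk at h; omega)

lemma exists_isHyperplane_of_notMem (hF : M.IsFlat F) (hx : x ∈ M.E) (hxF : x ∉ F) :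
    ∃ H, IsHyperplane M H ∧ F ⊆ H ∧ x ∉ H := by
  obtain ⟨I, hI⟩ := M.exists_isBasis F
  have hxI : M.Indep (insert x I) :=
    hI.indep.insert_indep_iff.mpr (Or.inl ⟨hx, by rwa [hI.closure_eq_closure, hF.closure]⟩)
  obtain ⟨B, hB, hxIB⟩ := hxI.exists_isBase_superset
  have hxB : x ∈ B := hxIB (mem_insert x I)
  have hxcl : x ∉ M.closure (B \ {x}) := hB.indep.notMem_closure_sdiff_of_mem hxB
  refine ⟨M.closure (B \ {x}), isHyperplane_of_mrank_add_one (M.isFlat_closure _) ?_, ?_, hxcl⟩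
  · rw [← mrank_closure_insert (M.isFlat_closure _) ⟨hx, hxcl⟩,
      closure_insert_closure_eq_closure_insert, insert_sdiff_singleton, insert_eq_of_mem hxB,
      hB.closure_eq]
    rfl
  · rw [← hF.closure, ← hI.closure_eq_closure]
    exact M.closure_subset_closure fun y hy =>
      ⟨hxIB (mem_insert_of_mem x hy), fun hyx => hxF (hI.subset (hyx ▸ hy))⟩

lemma mrank_inter_add_one (hmod : Modular M) (hF : M.IsFlat F) (hH : IsHyperplane M H)
    (hFH : ¬ F ⊆ H) : mrank M (F ∩ H) + 1 = mrank M F := by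
  have hmodFH := hmod F H hF hH.1
  rw [hH.closure_eq_ground subset_union_right (union_subset hF.subset_ground hH.1.subset_ground)
    fun h => hFH (subset_union_left.trans h)] at hmodFH
  have hrH := hH.mrank_add_one
  unfold mrk at hrH
  omega

end Hyperplane

def hyperplanesOver (M : Matroid α) (X : Set α) : Set (Set α) :=
  {H | IsHyperplane M H ∧ X ⊆ H}

section LinearSubclass

variable {M : Matroid α} {S : Set (Set α)} {X Y A G : Set α}

lemma linearSubclass_hyperplanesOver (M : Matroid α) (X : Set α) :
    LinearSubclass M (hyperplanesOver M X) :=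
  ⟨fun _ hH => hH.1,
    fun _ h₁ _ h₂ _ _ hH₃ hsub => ⟨hH₃, fun _ hx => hsub ⟨h₁.2 hx, h₂.2 hx⟩⟩⟩

lemma hyperplanesOver_subset_iff [M.Finite] (hX : M.IsFlat X) (hY : Y ⊆ M.E) :
    hyperplanesOver M X ⊆ hyperplanesOver M Y ↔ Y ⊆ X := by
  refine ⟨fun h y hy => by_contra fun hyX => ?_, fun hYX H hH => ⟨hH.1, hYX.trans hH.2⟩⟩
  obtain ⟨H, hH, hXH, hyH⟩ := exists_isHyperplane_of_notMem hX (hY hy) hyX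
  exact hyH ((h ⟨hH, hXH⟩).2 hy)

/-- The hyperplane `K` spanned by `G` and the coline `A ∩ H` lies in `S` and meets `A` in that
same coline, so `H ⊇ A ∩ K` lies in `S` too. -/
lemma hyperplanesOver_inter_subset [M.Finite] (hmod : Modular M) (hS : LinearSubclass M S)
    (hG : M.IsFlat G) (hGS : hyperplanesOver M G ⊆ S) (hA : A ∈ S) :
    hyperplanesOver M (A ∩ G) ⊆ S := by
  rintro H ⟨hH, hAGH⟩
  have hAh := hS.1 A hA
  by_cases hGA : G ⊆ A
  · exact hGS ⟨hH, by rwa [inter_eq_right.mpr hGA] at hAGH⟩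
  obtain rfl | hAH := eq_or_ne A H
  · exact hA
  have hrA := hAh.mrank_add_one
  have hrAG : mrank M (A ∩ G) + 1 = mrank M G := by
    rw [inter_comm]; exact mrank_inter_add_one hmod hG hAh hGA
  have hrAH : mrank M (A ∩ H) + 1 = mrank M A :=
    mrank_inter_add_one hmod hAh.1 hH fun h => hAH (hAh.eq_of_subset hH h)
  have hAHE : A ∩ H ⊆ M.E := inter_subset_left.trans hAh.1.subset_ground
  have hmodK := hmod G (A ∩ H) hG (hAh.1.inter hH.1)
  rw [show G ∩ (A ∩ H) = A ∩ G from subset_antisymm (fun y hy => ⟨hy.2.1, hy.1⟩)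
    fun y hy => ⟨hy.2, hy.1, hAGH hy⟩] at hmodK
  set K := M.closure (G ∪ (A ∩ H))
  have hK : IsHyperplane M K := isHyperplane_of_mrank_add_one (M.isFlat_closure _) (by omega)
  have hGAHK : G ∪ (A ∩ H) ⊆ K := M.subset_closure _ (union_subset hG.subset_ground hAHE)
  have hGK : G ⊆ K := subset_union_left.trans hGAHK
  have hAK : ¬ A ⊆ K := fun h => hGA (hGK.trans (hAh.eq_of_subset hK h).symm.subset)
  have hrAK := mrank_inter_add_one hmod hAh.1 hK hAK
  have hAHK : A ∩ H = A ∩ K := eq_of_isFlat_subset_of_mrank_le (hAh.1.inter hH.1)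
    (subset_inter inter_subset_left (subset_union_right.trans hGAHK))
    (inter_subset_left.trans hAh.1.subset_ground) (by omega)
  exact hS.2 A hA K (hGS ⟨hK, hGK⟩) (by omega) H hH (hAHK ▸ inter_subset_right)

lemma hyperplanesOver_ground_inter_sInter_subset [M.Finite] (hmod : Modular M)
    (hS : LinearSubclass M S) : hyperplanesOver M (M.E ∩ ⋂₀ S) ⊆ S := by
  have hSfin : S.Finite :=
    M.ground_finite.finite_subsets.subset fun H hH => (hS.1 H hH).1.subset_ground
  refine hSfin.induction_on_subset (motive := fun T _ => hyperplanesOver M (M.E ∩ ⋂₀ T) ⊆ S)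
    S ?_ ?_
  · rintro H ⟨hH, hEH⟩
    simp only [sInter_empty, inter_univ] at hEH
    exact (hH.2.1 (hH.1.subset_ground.antisymm hEH)).elim
  · intro A T hA hTS _ hTsub
    rw [sInter_insert, inter_left_comm]
    exact hyperplanesOver_inter_subset hmod hS
      (isFlat_ground_inter_sInter fun F hF => (hS.1 F (hTS hF)).1) hTsub hA

end LinearSubclass

theorem statement_8_general {M : Matroid α} [M.Finite] (hmod : Modular M) :
    (∀ X, M.IsFlat X → LinearSubclass M {H | IsHyperplane M H ∧ X ⊆ H}) ∧
    (∀ X Y, M.IsFlat X → M.IsFlat Y →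
      (Y ⊆ X ↔ {H | IsHyperplane M H ∧ X ⊆ H} ⊆ {H | IsHyperplane M H ∧ Y ⊆ H})) ∧
    ∀ S, LinearSubclass M S →
      ∃ X, M.IsFlat X ∧ {H | IsHyperplane M H ∧ X ⊆ H} = S := by
  refine ⟨fun X _ => linearSubclass_hyperplanesOver M X,
    fun X Y hX hY => (hyperplanesOver_subset_iff hX hY.subset_ground).symm, fun S hS => ?_⟩
  refine ⟨M.E ∩ ⋂₀ S, isFlat_ground_inter_sInter fun F hF => (hS.1 F hF).1, ?_⟩
  exact (hyperplanesOver_ground_inter_sInter_subset hmod hS).antisymm fun H hH =>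
    ⟨hS.1 H hH, inter_subset_right.trans (sInter_subset_of_mem hH)⟩

/-- for a simple modular matroid, `X ↦ {H hyperplane | X ⊆ H}` is
an isomorphism from the opposite of the flat lattice onto the extension
lattice (the lattice of linear subclasses). -/
theorem statement_8 {M : Matroid α} [M.Finite] {r : ℕ} (hr : mrk M = r)
    (hM : Simple M) (hmod : Modular M) :
    (∀ X, M.IsFlat X → LinearSubclass M {H | IsHyperplane M H ∧ X ⊆ H}) ∧
    (∀ X Y, M.IsFlat X → M.IsFlat Y →
      (Y ⊆ X ↔ {H | IsHyperplane M H ∧ X ⊆ H} ⊆ {H | IsHyperplane M H ∧ Y ⊆ H})) ∧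
    ∀ S, LinearSubclass M S →
      ∃ X, M.IsFlat X ∧ {H | IsHyperplane M H ∧ X ⊆ H} = S :=
  statement_8_general hmod

end AdjointPaper
end

section
/- Let A ∈ F^{r×m} be a matrix of rank r representing the matroid M = M[A], and let A′ ∈ F^{(m−r)×m} be a matrix whose rows form a basis of the null space {x : Ax = 0}, so that M[A′] = M*. Then the Oxley–Wang derived matroid δ_OW M (the vector matroid on the circuit vectors of M) is isomorphic to the type I adjoint σM* of M* (the vector matroid on the normal vectors of the hyperplanes of M*). -/
open Set Matroid
open scoped Matroid

namespace AdjointPaper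

variable {α β γ : Type*}

/-!
For a circuit `C` of `M`, the set `E \ C` is a hyperplane of `M✶`, so the normal vector
`h (E \ C)` is orthogonal to every column of `A'` outside `C`. Hence `h (E \ C) ᵥ* A'` is a
vector of the row space of `A'`, which is `ker A`, supported in `C`; such vectors are multiples
of the circuit vector `c C`, and the multiple is nonzero because the rows of `A'` are independent.
So the family of normal vectors is carried, up to nonzero rescaling, to the family of circuit
vectors by the injective linear map `y ↦ y ᵥ* A'`, which preserves linear independence.
-/

theorem isCircuit_iff_matroid_isCircuit {M : Matroid α} {C : Set α} :
    IsCircuit M C ↔ M.IsCircuit C := by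
  rw [Matroid.isCircuit_iff_forall_ssubset, Matroid.Dep]
  exact ⟨fun ⟨hCE, hC, hmin⟩ => ⟨⟨hC, hCE⟩, fun I hI => hmin I hI⟩,
    fun ⟨⟨hC, hCE⟩, hmin⟩ => ⟨hCE, hC, fun D hD => hmin hD⟩⟩

/- A cocircuit `K` is a minimal set with nonspanning complement, so `N.E \ K` is nonspanning
while adding any one element of `K` to it gives a spanning set. -/
theorem isHyperplane_compl_of_isCocircuit {N : Matroid α} {K : Set α} (hK : N.IsCocircuit K) :
    IsHyperplane N (N.E \ K) := by
  have hmin := Matroid.isCocircuit_iff_minimal_compl_nonspanning.mp hK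
  have hKE := hK.subset_ground
  have hspan : ∀ e ∈ K, N.closure (insert e (N.E \ K)) = N.E := fun e he => by
    have hsp : N.Spanning (N.E \ (K \ {e})) := not_not.mp <|
      hmin.not_prop_of_ssubset (Set.sdiff_singleton_ssubset.mpr he)
    refine (hsp.superset (fun x hx => ?_) (insert_subset (hKE he) sdiff_subset)).closure_eq
    by_cases hxe : x = e
    · exact hxe ▸ mem_insert x _
    · exact mem_insert_of_mem _ ⟨hx.1, fun hxK => hx.2 ⟨hxK, hxe⟩⟩
  have hclosure : N.closure (N.E \ K) = N.E \ K := by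
    refine (N.subset_closure _ sdiff_subset).antisymm' fun f hf =>
      ⟨N.closure_subset_ground _ hf, fun hfK => ?_⟩
    apply hmin.prop
    rw [Matroid.spanning_iff_closure_eq sdiff_subset,
      ← Matroid.closure_insert_eq_of_mem_closure hf, hspan f hfK]
  refine ⟨Matroid.isFlat_iff_closure_eq.mpr hclosure, fun hEK => hmin.prop ?_, ?_⟩
  · rw [hEK]
    exact N.ground_spanning
  · intro G hG hKG
    obtain ⟨e, heG, heK⟩ := exists_of_ssubset hKG
    have heK : e ∈ K := by_contra fun h => heK ⟨hG.subset_ground heG, h⟩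
    refine hG.subset_ground.antisymm ?_
    rw [← hspan e heK, ← hG.closure]
    exact N.closure_subset_closure (insert_subset heG hKG.subset)

section LinearAlgebra

open scoped Matrix

variable {F ι κ κ' : Type*} [Field F] [Fintype ι]

theorem eq_zero_of_mulVec_eq_zero_of_linearIndependent (A : Matrix κ ι F) {D : Set ι}
    (hD : LinearIndependent F (fun i : D => Aᵀ i)) {x : ι → F} (hx : A *ᵥ x = 0)
    (hxD : ∀ i ∉ D, x i = 0) : x = 0 := by
  have hl : (Finsupp.linearEquivFunOnFinite F F ι).symm x ∈ Finsupp.supported F F D :=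
    fun i hi => by_contra fun h => Finsupp.mem_support_iff.mp hi (hxD i h)
  simpa using (linearIndepOn_iff (v := fun i => Aᵀ i)).mp hD _ hl (by
    rw [Finsupp.linearCombination_eq_fintype_linearCombination_apply,
      Fintype.linearCombination_apply, ← Matrix.vecMul_eq_sum, Matrix.vecMul_transpose, hx])

/- Subtracting the multiple of `c` that kills one coordinate `e ∈ C` leaves a kernel vector
supported in `C \ {e}`. -/
theorem exists_eq_smul_of_mulVec_eq_zero (A : Matrix κ ι F) {C : Set ι}
    (hC : ∀ e ∈ C, LinearIndependent F (fun i : ↥(C \ {e}) => Aᵀ i)) {c x : ι → F}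
    (hc : A *ᵥ c = 0) (hcC : ∀ i, c i ≠ 0 ↔ i ∈ C) (hx : A *ᵥ x = 0)
    (hxC : ∀ i ∉ C, x i = 0) : ∃ a : F, x = a • c := by
  rcases C.eq_empty_or_nonempty with rfl | ⟨e, he⟩
  · exact ⟨0, funext fun i => by simpa using hxC i (notMem_empty i)⟩
  refine ⟨x e / c e, sub_eq_zero.mp <|
    eq_zero_of_mulVec_eq_zero_of_linearIndependent A (hC e he) ?_ fun i hi => ?_⟩
  · rw [Matrix.mulVec_sub, Matrix.mulVec_smul, hx, hc, smul_zero, sub_zero]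
  rcases eq_or_ne i e with rfl | hie
  · simp [div_mul_cancel₀ _ ((hcC i).mpr he)]
  · have hiC : i ∉ C := fun h => hi ⟨h, hie⟩
    simp [hxC i hiC, not_not.mp (mt (hcC i).mp hiC)]

theorem mulVec_vecMul_eq_zero {A : Matrix κ ι F} [Fintype κ'] {A' : Matrix κ' ι F}
    (hA' : Submodule.span F (Set.range fun i => A' i) ≤ LinearMap.ker A.mulVecLin)
    (v : κ' → F) : A *ᵥ (v ᵥ* A') = 0 :=
  hA' (range_vecMulLinear A' ▸ LinearMap.mem_range_self A'.vecMulLinear v)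

end LinearAlgebra

theorem statement_16_general {F : Type*} [Field F] {r m : ℕ}
    (A : Matrix (Fin r) (Fin m) F)
    (M : Matroid (Fin m)) (hME : M.E = Set.univ)
    (hMrep : ∀ I : Set (Fin m),
      M.Indep I ↔ LinearIndependent F (fun i : I => A.transpose i.1))
    (A' : Matrix (Fin (m - r)) (Fin m) F)
    (hA'ind : LinearIndependent F (fun i => A' i))
    (hA'span : Submodule.span F (Set.range fun i => A' i) = LinearMap.ker A.mulVecLin)
    (c : Set (Fin m) → (Fin m → F))
    (hc : ∀ C, IsCircuit M C → A.mulVec (c C) = 0 ∧ ∀ i, c C i ≠ 0 ↔ i ∈ C)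
    (h : Set (Fin m) → (Fin (m - r) → F))
    (hh : ∀ H, IsHyperplane M✶ H → h H ≠ 0 ∧
      ∀ e ∈ H, dotProduct (h H) (A'.transpose e) = 0) :
    ∀ Cs : Set (Set (Fin m)), (∀ C ∈ Cs, IsCircuit M C) →
      (LinearIndependent F (fun C : Cs => c C.1) ↔
        LinearIndependent F (fun C : Cs => h (Set.univ \ C.1))) := by
  intro Cs hCs
  have hC : ∀ C : Cs, M.IsCircuit C := fun C => isCircuit_iff_matroid_isCircuit.mp (hCs C C.2)
  have hH : ∀ C : Cs, IsHyperplane M✶ (Set.univ \ C) := fun C => by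
    simpa [hME] using isHyperplane_compl_of_isCocircuit (hC C).isCocircuit
  have hline : ∀ C : Cs, ∃ a : F, Matrix.vecMul (h (Set.univ \ C)) A' = a • c C := fun C =>
    exists_eq_smul_of_mulVec_eq_zero A
      (fun e he => (hMrep _).mp ((hC C).ssubset_indep (Set.sdiff_singleton_ssubset.mpr he)))
      (hc C (hCs C C.2)).1 (hc C (hCs C C.2)).2 (mulVec_vecMul_eq_zero hA'span.le _)
      fun e he => (hh _ (hH C)).2 e ⟨Set.mem_univ e, he⟩
  choose a ha using hline
  have hinj : Function.Injective A'.vecMul := Matrix.vecMul_injective_iff.mpr hA'ind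
  have ha0 : ∀ C, a C ≠ 0 := fun C h0 => (hh _ (hH C)).1 <|
    hinj (by simp only [ha C, h0, zero_smul, Matrix.zero_vecMul])
  have hfamily : (fun C : Cs => Matrix.vecMul (h (Set.univ \ C)) A') =
      (fun C => Units.mk0 (a C) (ha0 C)) • fun C : Cs => c C := funext ha
  rw [← LinearIndependent.units_smul_iff _ fun C => Units.mk0 (a C) (ha0 C), ← hfamily]
  exact A'.vecMulLinear.linearIndependent_iff (LinearMap.ker_eq_bot.mpr hinj)

/-- the Oxley–Wang derived matroid of `M = M[A]` is isomorphic to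
the type I adjoint of `M✶ = M[A']`, via `C ↦ E ∖ C`. -/
theorem statement_16 {F : Type*} [Field F] {r m : ℕ} (hrm : r ≤ m)
    (A : Matrix (Fin r) (Fin m) F) (hA : A.rank = r)
    (M : Matroid (Fin m)) (hME : M.E = Set.univ)
    (hMrep : ∀ I : Set (Fin m),
      M.Indep I ↔ LinearIndependent F (fun i : I => A.transpose i.1))
    (A' : Matrix (Fin (m - r)) (Fin m) F)
    (hA'ind : LinearIndependent F (fun i => A' i))
    (hA'span : Submodule.span F (Set.range fun i => A' i) = LinearMap.ker A.mulVecLin)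
    (hdual : ∀ I : Set (Fin m),
      M✶.Indep I ↔ LinearIndependent F (fun i : I => A'.transpose i.1))
    (c : Set (Fin m) → (Fin m → F))
    (hc : ∀ C, IsCircuit M C → A.mulVec (c C) = 0 ∧ ∀ i, c C i ≠ 0 ↔ i ∈ C)
    (h : Set (Fin m) → (Fin (m - r) → F))
    (hh : ∀ H, IsHyperplane M✶ H → h H ≠ 0 ∧
      ∀ e ∈ H, dotProduct (h H) (A'.transpose e) = 0) :
    ∀ Cs : Set (Set (Fin m)), (∀ C ∈ Cs, IsCircuit M C) →
      (LinearIndependent F (fun C : Cs => c C.1) ↔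
        LinearIndependent F (fun C : Cs => h (Set.univ \ C.1))) :=
  statement_16_general A M hME hMrep A' hA'ind hA'span c hc h hh

end AdjointPaper
end
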